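/- arXiv:1505.04187 — 2 statements merged into one kernel-verified Lean document; each statement's English description precedes it below -/
import Mathlib

section
/- Let φ : X → H be weakly measurable. Then: (i) φ is μ-total if and only if the range of T̂_φ is dense in H; (ii) if V_φ(X,μ) is a Hilbert space (complete), then the range of T̂_φ equals H if and only if φ is μ-total. -/
open MeasureTheory Filter Topology
open scoped Classical ENNReal NNReal

noncomputable section

variable {H : Type*} [NormedAddCommGroup H] [InnerProductSpace ℂ H] [CompleteSpace H]
  [TopologicalSpace.SeparableSpace H]
variable {X : Type*} [TopologicalSpace X] [LocallyCompactSpace X] [MeasurableSpace X]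
  [BorelSpace X]

/-- Notation for the Mathlib inner product (conjugate-linear in the first slot);
the paper's inner product `⟨f, g⟩` (linear in the first slot) is `⟪g, f⟫`. -/
local notation "⟪" x ", " y "⟫" => @inner ℂ _ _ x y

/-- `φ : X → H` is weakly measurable: `x ↦ ⟨f, φ x⟩` is measurable for every `f ∈ H`. -/
def WeaklyMeasurable (φ : X → H) : Prop :=
  ∀ f : H, Measurable fun x => ⟪φ x, f⟫

/-- `ξ ∈ 𝒱_φ(X,μ)`: `ξ` is measurable, the integral `∫ ξ(x) ⟨φ(x), g⟩ dμ(x)` exists for all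
`g ∈ H`, and it defines a bounded conjugate-linear functional of `g`. -/
def MemV (μ : Measure X) (φ : X → H) (ξ : X → ℂ) : Prop :=
  Measurable ξ ∧ (∀ g : H, Integrable (fun x => ξ x * ⟪g, φ x⟫) μ) ∧
    ∃ c : ℝ, ∀ g : H, ‖∫ x, ξ x * ⟪g, φ x⟫ ∂μ‖ ≤ c * ‖g‖

/-- The map `T_φ : 𝒱_φ(X,μ) → H`, determined weakly by
`⟨T_φ ξ, g⟩ = ∫ ξ(x) ⟨φ(x), g⟩ dμ(x)` for all `g ∈ H` (junk value `0` off `𝒱_φ`). -/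
def Tmap (μ : Measure X) (φ : X → H) (ξ : X → ℂ) : H :=
  if h : MemV μ φ ξ then
    have key : ∀ g : H, Integrable (fun x => (starRingEnd ℂ) (ξ x) * ⟪φ x, g⟫) μ := by
      intro g
      have h2 : Integrable (fun x => (RCLike.conjLIE : ℂ ≃ₗᵢ[ℝ] ℂ) (ξ x * ⟪g, φ x⟫)) μ :=
        ((RCLike.conjLIE : ℂ ≃ₗᵢ[ℝ] ℂ).integrable_comp_iff).2 (h.2.1 g)
      simpa [RCLike.conjLIE_apply, map_mul] using h2
    (InnerProductSpace.toDual ℂ H).symm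
      (LinearMap.mkContinuousOfExistsBound
        { toFun := fun g => ∫ x, (starRingEnd ℂ) (ξ x) * ⟪φ x, g⟫ ∂μ
          map_add' := fun g g' => by
            simp only [inner_add_right, mul_add]
            exact integral_add (key g) (key g')
          map_smul' := fun c g => by
            simp only [inner_smul_right, RingHom.id_apply]
            calc ∫ x, (starRingEnd ℂ) (ξ x) * (c * ⟪φ x, g⟫) ∂μ
                = ∫ x, c * ((starRingEnd ℂ) (ξ x) * ⟪φ x, g⟫) ∂μ := by
                  simp only [mul_left_comm]
              _ = c * ∫ x, (starRingEnd ℂ) (ξ x) * ⟪φ x, g⟫ ∂μ := integral_const_mul _ _ }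
        (by
          obtain ⟨c, hc⟩ := h.2.2
          refine ⟨c, fun g => ?_⟩
          have he : ∫ x, (starRingEnd ℂ) (ξ x) * ⟪φ x, g⟫ ∂μ
              = (starRingEnd ℂ) (∫ x, ξ x * ⟪g, φ x⟫ ∂μ) := by
            rw [← integral_conj]
            congr 1; funext x
            simp [map_mul]
          simp only [LinearMap.coe_mk, AddHom.coe_mk]
          rw [he, RCLike.norm_conj]
          exact hc g))
  else 0

/-- The norm `‖[ξ]_φ‖_φ = sup_{‖g‖ ≤ 1} |∫ ξ(x) ⟨φ(x), g⟩ dμ(x)|` (computed on a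
representative; it only depends on the class `[ξ]_φ = ξ + Ker T_φ`). -/
def Vnorm (μ : Measure X) (φ : X → H) (ξ : X → ℂ) : ℝ :=
  ⨆ g : {g : H // ‖g‖ ≤ 1}, ‖∫ x, ξ x * ⟪(g : H), φ x⟫ ∂μ‖

/-- The range of `T̂_φ : V_φ(X,μ) → H` (equivalently, of `T_φ` on `𝒱_φ(X,μ)`). -/
def Tran (μ : Measure X) (φ : X → H) : Set H := Tmap μ φ '' {ξ | MemV μ φ ξ}

/-- The analysis coefficient map: `(C_ψ f)(x) = ⟨f, ψ(x)⟩`. -/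
def Cpsi (ψ : X → H) (f : H) : X → ℂ := fun x => ⟪ψ x, f⟫

/-- `φ` is `μ`-total: `Ker C_φ = {0}`, i.e. if `∫ ξ(x) ⟨φ(x), f⟩ dμ(x) = 0` for every
`ξ ∈ 𝒱_φ(X,μ)`, then `f = 0`. -/
def MuTotal (μ : Measure X) (φ : X → H) : Prop :=
  ∀ f : H, (∀ ξ, MemV μ φ ξ → ∫ x, ξ x * ⟪f, φ x⟫ ∂μ = 0) → f = 0

/-- `S : H ≃L[ℂ] H` represents the sesquilinear form `Ω_{ψ,φ}`:
`⟨S f, g⟩ = ∫ ⟨f, ψ(x)⟩ ⟨φ(x), g⟩ dμ(x)` for all `f, g ∈ H`. -/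
def IsAnalysisOp (μ : Measure X) (ψ φ : X → H) (S : H ≃L[ℂ] H) : Prop :=
  ∀ f g : H, ⟪g, S f⟫ = ∫ x, ⟪ψ x, f⟫ * ⟪g, φ x⟫ ∂μ

/-- `(ψ, φ)` is a reproducing pair: both weakly measurable, the form
`Ω_{ψ,φ}(f,g) = ∫ ⟨f,ψ(x)⟩⟨φ(x),g⟩ dμ(x)` is well defined (integrable) and bounded, and the
associated bounded operator `S_{ψ,φ}` has a bounded everywhere-defined inverse. -/
def IsReproducingPair (μ : Measure X) (ψ φ : X → H) : Prop :=
  WeaklyMeasurable ψ ∧ WeaklyMeasurable φ ∧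
    (∀ f g : H, Integrable (fun x => ⟪ψ x, f⟫ * ⟪g, φ x⟫) μ) ∧
    ∃ S : H ≃L[ℂ] H, IsAnalysisOp μ ψ φ S

/-- Completeness of `V_φ(X,μ)` in the norm `‖·‖_φ`, phrased via representatives:
every `‖·‖_φ`-Cauchy sequence of elements of `𝒱_φ(X,μ)` converges in `‖·‖_φ`
to an element of `𝒱_φ(X,μ)`. -/
def VComplete (μ : Measure X) (φ : X → H) : Prop :=
  ∀ ξ : ℕ → X → ℂ, (∀ n, MemV μ φ (ξ n)) →
    (∀ ε : ℝ, 0 < ε → ∃ N, ∀ m ≥ N, ∀ n ≥ N, Vnorm μ φ (ξ m - ξ n) < ε) →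
    ∃ η, MemV μ φ η ∧ Tendsto (fun n => Vnorm μ φ (ξ n - η)) atTop (𝓝 0)

/-- `F` is (induced by) a bounded linear functional on `V_φ(X,μ)`: it is linear on `𝒱_φ(X,μ)`,
constant on the classes of `V_φ(X,μ) = 𝒱_φ(X,μ)/Ker T_φ`, and bounded for `‖·‖_φ`. -/
def IsBddLinearFunctional (μ : Measure X) (φ : X → H) (F : (X → ℂ) → ℂ) : Prop :=
  (∀ ξ η, MemV μ φ ξ → MemV μ φ η → F (ξ + η) = F ξ + F η) ∧
  (∀ (c : ℂ) ξ, MemV μ φ ξ → F (c • ξ) = c * F ξ) ∧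
  (∀ ξ η, MemV μ φ ξ → MemV μ φ η → Tmap μ φ (ξ - η) = 0 → F ξ = F η) ∧
  ∃ c : ℝ, ∀ ξ, MemV μ φ ξ → ‖F ξ‖ ≤ c * Vnorm μ φ ξ

/-- The dual norm `‖F‖_{φ*} = sup_{‖[ξ]_φ‖_φ ≤ 1} |F([ξ]_φ)|`. -/
def DualNorm (μ : Measure X) (φ : X → H) (F : (X → ℂ) → ℂ) : ℝ :=
  ⨆ ξ : {ξ : X → ℂ // MemV μ φ ξ ∧ Vnorm μ φ ξ ≤ 1}, ‖F ξ.1‖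

/-- `V_φ(X,μ)` and `V_ψ(X,μ)` are conjugate dual to each other with respect to the pairing
`⟨⟨ξ, η⟩⟩ = ∫ ξ(x) conj(η(x)) dμ(x)`: the pairing is well defined, each class `[η]_ψ` gives a
bounded linear functional on `V_φ(X,μ)`, and `[η]_ψ ↦ ⟨⟨·, η⟩⟩` is a bijection from `V_ψ(X,μ)`
onto the dual of `V_φ(X,μ)`. -/
def ConjDual (μ : Measure X) (φ ψ : X → H) : Prop :=
  (∀ ξ η, MemV μ φ ξ → MemV μ ψ η →
      Integrable (fun x => ξ x * (starRingEnd ℂ) (η x)) μ) ∧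
  (∀ η, MemV μ ψ η →
      IsBddLinearFunctional μ φ (fun ξ => ∫ x, ξ x * (starRingEnd ℂ) (η x) ∂μ)) ∧
  (∀ η η', MemV μ ψ η → MemV μ ψ η' →
      (∀ ξ, MemV μ φ ξ →
        ∫ x, ξ x * (starRingEnd ℂ) (η x) ∂μ = ∫ x, ξ x * (starRingEnd ℂ) (η' x) ∂μ) →
      Tmap μ ψ (η - η') = 0) ∧
  (∀ F, IsBddLinearFunctional μ φ F →
      ∃ η, MemV μ ψ η ∧ ∀ ξ, MemV μ φ ξ → F ξ = ∫ x, ξ x * (starRingEnd ℂ) (η x) ∂μ)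

/-! `T̂_φ` is an isometry of `V_φ(X,μ)` onto its range, and
`⟨T_φ ξ, f⟩ = ∫ ξ(x) ⟨φ(x), f⟩ dμ(x) = (C_φ f)([ξ]_φ)` shows that `Ker C_φ` is the orthogonal
complement of that range. Hence `φ` is `μ`-total iff the range has trivial orthogonal complement,
i.e. is dense. If `V_φ(X,μ)` is complete, so is its isometric image, which is therefore closed,
and a closed dense subspace is all of `H`. -/

theorem norm_eq_iSup_norm_inner {𝕜 E : Type*} [RCLike 𝕜] [NormedAddCommGroup E]
    [InnerProductSpace 𝕜 E] (v : E) :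
    ‖v‖ = ⨆ g : {g : E // ‖g‖ ≤ 1}, ‖inner 𝕜 v (g : E)‖ := by
  rw [← innerSL_apply_norm 𝕜 v, ← ContinuousLinearMap.sSup_unitClosedBall_eq_norm, iSup]
  congr 1
  ext r
  simp

section VSpace

omit [TopologicalSpace.SeparableSpace H] [TopologicalSpace X] [LocallyCompactSpace X]
  [BorelSpace X]

variable {μ : Measure X} {φ : X → H} {ξ η : X → ℂ}

omit [CompleteSpace H] in
theorem MemV.zero : MemV μ φ 0 :=
  ⟨measurable_zero, fun g => by simp, 0, fun g => by simp⟩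

omit [CompleteSpace H] in
theorem MemV.add (hξ : MemV μ φ ξ) (hη : MemV μ φ η) : MemV μ φ (ξ + η) := by
  obtain ⟨hξm, hξi, c, hc⟩ := hξ
  obtain ⟨hηm, hηi, d, hd⟩ := hη
  refine ⟨hξm.add hηm, fun g => ?_, c + d, fun g => ?_⟩
  · simp only [Pi.add_apply, add_mul]
    exact (hξi g).add (hηi g)
  · simp only [Pi.add_apply, add_mul]
    rw [integral_add (hξi g) (hηi g)]
    exact (norm_add_le _ _).trans (add_le_add (hc g) (hd g))

omit [CompleteSpace H] in
theorem MemV.const_smul (c : ℂ) (hξ : MemV μ φ ξ) : MemV μ φ (c • ξ) := by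
  obtain ⟨hξm, hξi, d, hd⟩ := hξ
  refine ⟨hξm.const_smul c, fun g => ?_, ‖c‖ * d, fun g => ?_⟩
  · simpa only [Pi.smul_apply, smul_eq_mul, mul_assoc] using (hξi g).const_mul c
  · simp only [Pi.smul_apply, smul_eq_mul, mul_assoc]
    rw [integral_const_mul, norm_mul]
    exact mul_le_mul_of_nonneg_left (hd g) (norm_nonneg c)

omit [CompleteSpace H] in
theorem MemV.sub (hξ : MemV μ φ ξ) (hη : MemV μ φ η) : MemV μ φ (ξ - η) := by
  simpa only [sub_eq_add_neg, neg_one_smul] using hξ.add (hη.const_smul (-1))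

theorem inner_Tmap_right (hξ : MemV μ φ ξ) (g : H) :
    ⟪g, Tmap μ φ ξ⟫ = ∫ x, ξ x * ⟪g, φ x⟫ ∂μ := by
  rw [← inner_conj_symm, Tmap, dif_pos hξ, InnerProductSpace.toDual_symm_apply,
    LinearMap.mkContinuousOfExistsBound_apply, LinearMap.coe_mk, AddHom.coe_mk, ← integral_conj]
  simp only [map_mul, Complex.conj_conj, inner_conj_symm]

theorem Tmap_zero : Tmap μ φ 0 = 0 :=
  ext_inner_left ℂ fun g => by simp [inner_Tmap_right MemV.zero]

theorem Tmap_add (hξ : MemV μ φ ξ) (hη : MemV μ φ η) :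
    Tmap μ φ (ξ + η) = Tmap μ φ ξ + Tmap μ φ η := by
  refine ext_inner_left ℂ fun g => ?_
  rw [inner_add_right, inner_Tmap_right (hξ.add hη), inner_Tmap_right hξ, inner_Tmap_right hη,
    ← integral_add (hξ.2.1 g) (hη.2.1 g)]
  simp only [Pi.add_apply, add_mul]

theorem Tmap_const_smul (c : ℂ) (hξ : MemV μ φ ξ) : Tmap μ φ (c • ξ) = c • Tmap μ φ ξ := by
  refine ext_inner_left ℂ fun g => ?_
  rw [inner_smul_right, inner_Tmap_right (hξ.const_smul c), inner_Tmap_right hξ,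
    ← integral_const_mul]
  simp only [Pi.smul_apply, smul_eq_mul, mul_assoc]

theorem Tmap_sub (hξ : MemV μ φ ξ) (hη : MemV μ φ η) :
    Tmap μ φ (ξ - η) = Tmap μ φ ξ - Tmap μ φ η := by
  refine ext_inner_left ℂ fun g => ?_
  rw [inner_sub_right, inner_Tmap_right (hξ.sub hη), inner_Tmap_right hξ, inner_Tmap_right hη,
    ← integral_sub (hξ.2.1 g) (hη.2.1 g)]
  simp only [Pi.sub_apply, sub_mul]

theorem Vnorm_eq_norm_Tmap (hξ : MemV μ φ ξ) : Vnorm μ φ ξ = ‖Tmap μ φ ξ‖ := by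
  rw [Vnorm, norm_eq_iSup_norm_inner (𝕜 := ℂ)]
  congr 1
  funext g
  rw [← inner_conj_symm, inner_Tmap_right hξ, RCLike.norm_conj]

theorem Vnorm_sub_eq_dist (hξ : MemV μ φ ξ) (hη : MemV μ φ η) :
    Vnorm μ φ (ξ - η) = dist (Tmap μ φ ξ) (Tmap μ φ η) := by
  rw [Vnorm_eq_norm_Tmap (hξ.sub hη), Tmap_sub hξ hη, dist_eq_norm]

variable (μ φ)

def tranSubmodule : Submodule ℂ H where
  carrier := Tran μ φ
  zero_mem' := ⟨0, MemV.zero, Tmap_zero⟩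
  add_mem' := by
    rintro - - ⟨ξ, hξ, rfl⟩ ⟨η, hη, rfl⟩
    exact ⟨ξ + η, hξ.add hη, Tmap_add hξ hη⟩
  smul_mem' := by
    rintro c - ⟨ξ, hξ, rfl⟩
    exact ⟨c • ξ, hξ.const_smul c, Tmap_const_smul c hξ⟩

theorem mem_orthogonal_tranSubmodule_iff (f : H) :
    f ∈ (tranSubmodule μ φ)ᗮ ↔ ∀ ξ, MemV μ φ ξ → ∫ x, ξ x * ⟪f, φ x⟫ ∂μ = 0 := by
  change (∀ u ∈ Tmap μ φ '' {ξ | MemV μ φ ξ}, ⟪u, f⟫ = 0) ↔ _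
  refine Set.forall_mem_image.trans <| forall₂_congr fun ξ hξ => ?_
  rw [inner_eq_zero_symm, inner_Tmap_right hξ]

theorem muTotal_iff_dense_Tran : MuTotal μ φ ↔ Dense (Tran μ φ) := by
  rw [show Tran μ φ = tranSubmodule μ φ from rfl, Submodule.dense_iff_topologicalClosure_eq_top,
    Submodule.topologicalClosure_eq_top_iff, Submodule.eq_bot_iff]
  exact forall_congr' fun f => by rw [mem_orthogonal_tranSubmodule_iff]

theorem isClosed_Tran_of_VComplete (hV : VComplete μ φ) : IsClosed (Tran μ φ) := by
  refine isClosed_of_closure_subset fun f hf => ?_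
  obtain ⟨u, hu, hlim⟩ := mem_closure_iff_seq_limit.1 hf
  choose ξ hξ hTξ using hu
  have hCauchy : ∀ ε : ℝ, 0 < ε → ∃ N, ∀ m ≥ N, ∀ n ≥ N, Vnorm μ φ (ξ m - ξ n) < ε := by
    intro ε hε
    obtain ⟨N, hN⟩ := Metric.cauchySeq_iff.1 hlim.cauchySeq ε hε
    exact ⟨N, fun m hm n hn => by simpa [Vnorm_sub_eq_dist (hξ m) (hξ n), hTξ] using hN m hm n hn⟩
  obtain ⟨η, hη, hξη⟩ := hV ξ hξ hCauchy
  have hlim' : Tendsto u atTop (𝓝 (Tmap μ φ η)) := by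
    rw [tendsto_iff_dist_tendsto_zero]
    simpa [Vnorm_sub_eq_dist (hξ _) hη, hTξ] using hξη
  exact tendsto_nhds_unique hlim hlim' ▸ ⟨η, hη, rfl⟩

end VSpace

theorem statement2_general (μ : Measure X) (φ : X → H) :
    (MuTotal μ φ ↔ Dense (Tran μ φ)) ∧
    (VComplete μ φ → (Tran μ φ = Set.univ ↔ MuTotal μ φ)) := by
  have hDense := muTotal_iff_dense_Tran μ φ
  refine ⟨hDense, fun hV => ⟨fun hUniv => hDense.2 (hUniv ▸ dense_univ), fun hTotal => ?_⟩⟩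
  rw [← (isClosed_Tran_of_VComplete μ φ hV).closure_eq]
  exact (hDense.1 hTotal).closure_eq

/-- Let `φ : X → H` be weakly measurable. Then (i) `φ` is `μ`-total iff the
range of `T̂_φ` is dense in `H`; (ii) if `V_φ(X,μ)` is a Hilbert space (complete), then the
range of `T̂_φ` equals `H` iff `φ` is `μ`-total. -/
theorem statement2 (μ : Measure X) [μ.Regular] (φ : X → H) (hφ : WeaklyMeasurable φ) :
    (MuTotal μ φ ↔ Dense (Tran μ φ)) ∧
    (VComplete μ φ → (Tran μ φ = Set.univ ↔ MuTotal μ φ)) :=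
  statement2_general μ φ
end
end

section
/- Let (ψ,φ) be a reproducing pair of weakly measurable functions X → H. Then the range of Ĉ_{ψ,φ} (i.e. the set of classes [⟨f,ψ(·)⟩]_φ, f ∈ H) is dense in V_φ(X,μ) with respect to ‖·‖_φ. -/
open MeasureTheory Filter Topology
open scoped Classical ENNReal NNReal

noncomputable section

variable {H : Type*} [NormedAddCommGroup H] [InnerProductSpace ℂ H] [CompleteSpace H]
  [TopologicalSpace.SeparableSpace H]
variable {X : Type*} [TopologicalSpace X] [LocallyCompactSpace X] [MeasurableSpace X]
  [BorelSpace X]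

/-- Notation for the Mathlib inner product (conjugate-linear in the first slot);
the paper's inner product `⟨f, g⟩` (linear in the first slot) is `⟪g, f⟫`. -/
local notation "⟪" x ", " y "⟫" => @inner ℂ _ _ x y

/-!
`Ĉ_{ψ,φ}` is in fact onto `V_φ(X,μ)`. Given `ξ ∈ 𝒱_φ(X,μ)`, put `f = S⁻¹ T_φ ξ`. For every `g`,
`∫ ⟨f,ψ(x)⟩⟨φ(x),g⟩ dμ = ⟨S f, g⟩ = ⟨T_φ ξ, g⟩ = ∫ ξ(x)⟨φ(x),g⟩ dμ`,
so `⟨f,ψ(·)⟩ - ξ` lies in `Ker T_φ` and has `‖·‖_φ`-norm zero.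
-/

section

omit [TopologicalSpace.SeparableSpace H] [TopologicalSpace X] [LocallyCompactSpace X]
  [BorelSpace X]

variable {μ : Measure X} {ψ φ : X → H}

lemma inner_Tmap {ξ : X → ℂ} (hξ : MemV μ φ ξ) (g : H) :
    ⟪g, Tmap μ φ ξ⟫ = ∫ x, ξ x * ⟪g, φ x⟫ ∂μ := by
  rw [← inner_conj_symm, Tmap, dif_pos hξ, InnerProductSpace.toDual_symm_apply]
  change (starRingEnd ℂ) (∫ x, (starRingEnd ℂ) (ξ x) * ⟪φ x, g⟫ ∂μ) = _
  rw [← integral_conj]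
  simp

omit [CompleteSpace H] in
lemma Vnorm_eq_zero_of_forall_integral_eq_zero {ξ : X → ℂ}
    (hξ : ∀ g : H, ∫ x, ξ x * ⟪g, φ x⟫ ∂μ = 0) : Vnorm μ φ ξ = 0 := by
  simp [Vnorm, hξ]

lemma integral_Cpsi_symm_Tmap_sub_mul_eq_zero
    (hint : ∀ f g : H, Integrable (fun x => ⟪ψ x, f⟫ * ⟪g, φ x⟫) μ) {S : H ≃L[ℂ] H}
    (hS : IsAnalysisOp μ ψ φ S) {ξ : X → ℂ} (hξ : MemV μ φ ξ) (g : H) :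
    ∫ x, (Cpsi ψ (S.symm (Tmap μ φ ξ)) - ξ) x * ⟪g, φ x⟫ ∂μ = 0 := by
  simp only [Pi.sub_apply, Cpsi, sub_mul]
  rw [integral_sub (hint _ g) (hξ.2.1 g), ← hS, ← inner_Tmap hξ, S.apply_symm_apply, sub_self]

end

theorem statement10_general (μ : Measure X) (ψ φ : X → H)
    (h : IsReproducingPair μ ψ φ) :
    ∀ ξ, MemV μ φ ξ → ∀ ε : ℝ, 0 < ε → ∃ f : H, Vnorm μ φ (Cpsi ψ f - ξ) < ε := by
  intro ξ hξ ε hε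
  obtain ⟨-, -, hint, S, hS⟩ := h
  refine ⟨S.symm (Tmap μ φ ξ), ?_⟩
  rwa [Vnorm_eq_zero_of_forall_integral_eq_zero
    (integral_Cpsi_symm_Tmap_sub_mul_eq_zero hint hS hξ)]

/-- Let `(ψ,φ)` be a reproducing pair. Then the range of `Ĉ_{ψ,φ}`
(the set of classes `[⟨f,ψ(·)⟩]_φ`, `f ∈ H`) is dense in `V_φ(X,μ)` for `‖·‖_φ`. -/
theorem statement10 (μ : Measure X) [μ.Regular] (ψ φ : X → H)
    (h : IsReproducingPair μ ψ φ) :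
    ∀ ξ, MemV μ φ ξ → ∀ ε : ℝ, 0 < ε → ∃ f : H, Vnorm μ φ (Cpsi ψ f - ξ) < ε :=
  statement10_general μ ψ φ h
end
end
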